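/- arXiv:math-ph/0512051 — 5 statements merged into one kernel-verified Lean document; each statement's English description precedes it below -/
import Mathlib

section
/- Let n : ℕ, let γ : Matrix (Fin n) (Fin n) ℂ → ℂ be differentiable, and let G : Matrix (Fin n) (Fin n) ℂ → Matrix (Fin n) (Fin n) ℂ be a trace-gradient of γ, i.e. for all ρ σ, (fderiv ℂ γ ρ) σ = Matrix.trace (σ * G ρ). If ρ : ℝ → Matrix (Fin n) (Fin n) ℂ is differentiable and satisfies ρ'(t) = Complex.I • (ρ(t) * G (ρ t) − G (ρ t) * ρ(t)) for all t, then the Hamiltonian functional is an integral of motion: γ (ρ t) = γ (ρ t₀) for all t₀ t. -/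
attribute [local instance] Matrix.normedAddCommGroup Matrix.normedSpace

/-!
Along a solution, the chain rule gives `d/dt γ(ρ t) = Tr(ρ' G(ρ)) = i Tr((ρG − Gρ)G)`,
and this vanishes by cyclicity of the trace: `Tr(ρGG) = Tr(GρG)`.
-/

theorem Matrix.trace_commutator_mul_right {m R : Type*} [Fintype m] [CommRing R]
    (A B : Matrix m m R) : Matrix.trace ((A * B - B * A) * B) = 0 := by
  rw [Matrix.sub_mul, Matrix.trace_sub, Matrix.mul_assoc B, Matrix.trace_mul_comm B, sub_self]

theorem eq_of_fderiv_apply_deriv_eq_zero {𝕜 E F : Type*} [NontriviallyNormedField 𝕜]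
    [NormedAlgebra ℝ 𝕜] [NormedAddCommGroup E] [NormedSpace 𝕜 E] [NormedSpace ℝ E]
    [IsScalarTower ℝ 𝕜 E] [NormedAddCommGroup F] [NormedSpace 𝕜 F] [NormedSpace ℝ F]
    [IsScalarTower ℝ 𝕜 F] {f : E → F} {c : ℝ → E} (hf : Differentiable 𝕜 f)
    (hc : Differentiable ℝ c) (h : ∀ t, fderiv 𝕜 f (c t) (deriv c t) = 0) (s t : ℝ) :
    f (c t) = f (c s) := by
  have hderiv : ∀ u, HasDerivAt (fun u => f (c u)) 0 u := fun u =>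
    (((hf (c u)).hasFDerivAt.restrictScalars ℝ).comp_hasDerivAt u (hc u).hasDerivAt).congr_deriv
      (h u)
  exact is_const_of_deriv_eq_zero (fun u => (hderiv u).differentiableAt)
    (fun u => (hderiv u).deriv) t s

/-- The Hamiltonian functional `γ` is an integral of motion of the Vlasov (von Neumann)
equation `ρ'(t) = i • (ρ(t) G(ρ t) − G(ρ t) ρ(t))`, where `G` is a trace-gradient of `γ`. -/
theorem hamiltonian_constant_of_vlasov (n : ℕ)
    (γ : Matrix (Fin n) (Fin n) ℂ → ℂ)
    (G : Matrix (Fin n) (Fin n) ℂ → Matrix (Fin n) (Fin n) ℂ)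
    (hγ : Differentiable ℂ γ)
    (hG : ∀ ρ σ : Matrix (Fin n) (Fin n) ℂ, (fderiv ℂ γ ρ) σ = Matrix.trace (σ * G ρ))
    (ρ : ℝ → Matrix (Fin n) (Fin n) ℂ)
    (hρ : Differentiable ℝ ρ)
    (heq : ∀ t : ℝ, deriv ρ t = Complex.I • (ρ t * G (ρ t) - G (ρ t) * ρ t)) :
    ∀ t₀ t : ℝ, γ (ρ t) = γ (ρ t₀) := by
  have hconserved : ∀ t, fderiv ℂ γ (ρ t) (deriv ρ t) = 0 := fun t => by
    rw [hG, heq, Matrix.smul_mul, Matrix.trace_smul, Matrix.trace_commutator_mul_right, smul_zero]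
  exact eq_of_fderiv_apply_deriv_eq_zero hγ hρ hconserved
end

section
/- Let n : ℕ, let γ, α : Matrix (Fin n) (Fin n) ℂ → ℂ be differentiable with trace-gradients G resp. A (i.e. for all ρ σ, (fderiv ℂ γ ρ) σ = Matrix.trace (σ * G ρ) and (fderiv ℂ α ρ) σ = Matrix.trace (σ * A ρ)). If ρ : ℝ → Matrix (Fin n) (Fin n) ℂ is differentiable and satisfies the Vlasov (von Neumann) equation ρ'(t) = Complex.I • (ρ(t) * G (ρ t) − G (ρ t) * ρ(t)) for all t, then for all t the composite t ↦ α (ρ t) is differentiable and d/dt α (ρ t) = Complex.I * Matrix.trace (ρ t * (G (ρ t) * A (ρ t) − A (ρ t) * G (ρ t))). -/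
attribute [local instance] Matrix.normedAddCommGroup Matrix.normedSpace

/-! The chain rule turns `d/dt α(ρ t)` into `Tr(ρ'(t) A(ρ t))`; inserting the Vlasov equation
gives `i Tr([ρ, G] A)`, and cyclicity of the trace moves the commutator onto `G` and `A`. -/

open Matrix

theorem Matrix.trace_commutator_mul {m R : Type*} [Fintype m] [CommRing R] (a b c : Matrix m m R) :
    trace ((a * b - b * a) * c) = trace (a * (b * c - c * b)) := by
  rw [Matrix.sub_mul, Matrix.mul_sub, trace_sub, trace_sub, Matrix.mul_assoc, Matrix.mul_assoc,
    trace_mul_comm b, Matrix.mul_assoc]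

theorem hasDerivAt_comp_of_fderiv_eq_trace {m : Type*} [Fintype m]
    {α : Matrix m m ℂ → ℂ} {a : Matrix m m ℂ} {ρ : ℝ → Matrix m m ℂ} {ρ' : Matrix m m ℂ} {t : ℝ}
    (hα : DifferentiableAt ℂ α (ρ t)) (hA : ∀ σ, fderiv ℂ α (ρ t) σ = trace (σ * a))
    (hρ : HasDerivAt ρ ρ' t) :
    HasDerivAt (fun s => α (ρ s)) (trace (ρ' * a)) t := by
  rw [← hA]
  exact (hα.hasFDerivAt.restrictScalars ℝ).comp_hasDerivAt t hρ

theorem poisson_evolution_of_vlasov_general (n : ℕ)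
    (α : Matrix (Fin n) (Fin n) ℂ → ℂ)
    (G A : Matrix (Fin n) (Fin n) ℂ → Matrix (Fin n) (Fin n) ℂ)
    (hα : Differentiable ℂ α)
    (hA : ∀ ρ σ : Matrix (Fin n) (Fin n) ℂ, (fderiv ℂ α ρ) σ = Matrix.trace (σ * A ρ))
    (ρ : ℝ → Matrix (Fin n) (Fin n) ℂ)
    (hρ : Differentiable ℝ ρ)
    (heq : ∀ t : ℝ, deriv ρ t = Complex.I • (ρ t * G (ρ t) - G (ρ t) * ρ t)) :
    ∀ t : ℝ, HasDerivAt (fun s => α (ρ s))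
      (Complex.I * Matrix.trace (ρ t * (G (ρ t) * A (ρ t) - A (ρ t) * G (ρ t)))) t := by
  intro t
  have hρt := (hρ t).hasDerivAt.congr_deriv (heq t)
  have h := hasDerivAt_comp_of_fderiv_eq_trace (hα (ρ t)) (hA (ρ t)) hρt
  rwa [Matrix.smul_mul, trace_smul, smul_eq_mul, trace_commutator_mul] at h

/-- Along solutions of the Vlasov (von Neumann) equation, every differentiable functional `α`
with trace-gradient `A` evolves by the classical Poisson bracket:
`d/dt α(ρ t) = i · Tr(ρ t · [G(ρ t), A(ρ t)])`. -/
theorem poisson_evolution_of_vlasov (n : ℕ)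
    (γ α : Matrix (Fin n) (Fin n) ℂ → ℂ)
    (G A : Matrix (Fin n) (Fin n) ℂ → Matrix (Fin n) (Fin n) ℂ)
    (hγ : Differentiable ℂ γ) (hα : Differentiable ℂ α)
    (hG : ∀ ρ σ : Matrix (Fin n) (Fin n) ℂ, (fderiv ℂ γ ρ) σ = Matrix.trace (σ * G ρ))
    (hA : ∀ ρ σ : Matrix (Fin n) (Fin n) ℂ, (fderiv ℂ α ρ) σ = Matrix.trace (σ * A ρ))
    (ρ : ℝ → Matrix (Fin n) (Fin n) ℂ)
    (hρ : Differentiable ℝ ρ)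
    (heq : ∀ t : ℝ, deriv ρ t = Complex.I • (ρ t * G (ρ t) - G (ρ t) * ρ t)) :
    ∀ t : ℝ, HasDerivAt (fun s => α (ρ s))
      (Complex.I * Matrix.trace (ρ t * (G (ρ t) * A (ρ t) - A (ρ t) * G (ρ t)))) t :=
  poisson_evolution_of_vlasov_general n α G A hα hA ρ hρ heq
end

section
/- Let E be a complex Hilbert space (a complete InnerProductSpace over ℂ). For ψ ∈ E define the outer product operator outer ψ : E →L[ℂ] E by (outer ψ) χ = ⟪ψ, χ⟫ • ψ. Let H : ℝ × (E →L[ℂ] E) → (E →L[ℂ] E) be any function, let φ ∈ E, let ω : ℝ → ℝ be continuous, let t₀ ∈ ℝ, and assume the stationarity (eigenvector) condition H (t, outer φ) φ = (ω t : ℂ) • φ holds for all t. Then the function ψ : ℝ → E defined by ψ t = Complex.exp (−Complex.I * (∫ s in t₀..t, ω s)) • φ satisfies ψ t₀ = φ and solves the abstract Hartree equation: for every t, ψ is differentiable at t with ψ'(t) = −Complex.I • H (t, outer (ψ t)) (ψ t). -/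
open scoped InnerProductSpace

/-- The outer product `ψψ*`: the rank-one operator `χ ↦ ⟪ψ, χ⟫ • ψ`. -/
noncomputable def outer {E : Type*} [NormedAddCommGroup E] [InnerProductSpace ℂ E]
    (ψ : E) : E →L[ℂ] E :=
  (innerSL ℂ ψ).smulRight ψ

/-! A solution `ψ t = e^{-iΘ(t)} φ` with `Θ' = ω` has the constant density `ψψ* = φφ*`, because
`|e^{-iΘ}| = 1`. The Hartree equation therefore reduces to the linear eigenvalue equation
`H(t, φφ*) φ = ω(t) φ`, and `ψ' = -iω ψ` is just the chain rule for the phase. -/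

open Complex

section Hartree

variable {E : Type*} [NormedAddCommGroup E] [InnerProductSpace ℂ E]

theorem outer_smul (c : ℂ) (ψ : E) : outer (c • ψ) = (‖c‖ : ℂ) ^ 2 • outer ψ := by
  ext χ
  simp only [outer, ContinuousLinearMap.smulRight_apply, innerSL_apply_apply, inner_smul_left,
    FunLike.coe_smul, Pi.smul_apply, smul_smul]
  rw [mul_right_comm, conj_mul']

theorem outer_smul_of_norm_eq_one {c : ℂ} (hc : ‖c‖ = 1) (ψ : E) : outer (c • ψ) = outer ψ := by
  rw [outer_smul, hc]
  simp

theorem norm_exp_neg_I_mul_ofReal (x : ℝ) : ‖exp (-I * x)‖ = 1 := by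
  simp [norm_exp]

theorem hasDerivAt_exp_neg_I_mul_smul {Θ : ℝ → ℝ} {θ' t : ℝ} (hΘ : HasDerivAt Θ θ' t) (φ : E) :
    HasDerivAt (fun t => exp (-I * (Θ t : ℂ)) • φ)
      ((-I) • (θ' : ℂ) • exp (-I * (Θ t : ℂ)) • φ) t := by
  have hphase := ((hΘ.ofReal_comp).const_mul (-I)).cexp
  convert hphase.smul_const φ using 1
  simp only [smul_smul]
  ring_nf

theorem hasDerivAt_hartree_of_stationary (H : ℝ × (E →L[ℂ] E) → (E →L[ℂ] E)) (φ : E)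
    {ω Θ : ℝ → ℝ} (hΘ : ∀ t, HasDerivAt Θ (ω t) t)
    (hstat : ∀ t : ℝ, H (t, outer φ) φ = (ω t : ℂ) • φ) (t : ℝ) :
    HasDerivAt (fun t => exp (-I * (Θ t : ℂ)) • φ)
      ((-I) • H (t, outer (exp (-I * (Θ t : ℂ)) • φ)) (exp (-I * (Θ t : ℂ)) • φ)) t := by
  rw [outer_smul_of_norm_eq_one (norm_exp_neg_I_mul_ofReal (Θ t)), map_smul, hstat t,
    smul_comm (exp (-I * (Θ t : ℂ)))]
  exact hasDerivAt_exp_neg_I_mul_smul (hΘ t) φ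

end Hartree

theorem soliton_solves_hartree_general {E : Type*} [NormedAddCommGroup E] [InnerProductSpace ℂ E]
    (H : ℝ × (E →L[ℂ] E) → (E →L[ℂ] E)) (φ : E) (ω : ℝ → ℝ) (t₀ : ℝ)
    (hω : Continuous ω)
    (hstat : ∀ t : ℝ, H (t, outer φ) φ = (ω t : ℂ) • φ) :
    (fun t : ℝ => Complex.exp (-Complex.I * ((∫ s in t₀..t, ω s : ℝ) : ℂ)) • φ) t₀ = φ ∧
      ∀ t : ℝ, HasDerivAt
        (fun t : ℝ => Complex.exp (-Complex.I * ((∫ s in t₀..t, ω s : ℝ) : ℂ)) • φ)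
        ((-Complex.I) • H (t, outer
            (Complex.exp (-Complex.I * ((∫ s in t₀..t, ω s : ℝ) : ℂ)) • φ))
          (Complex.exp (-Complex.I * ((∫ s in t₀..t, ω s : ℝ) : ℂ)) • φ)) t :=
  ⟨by simp, hasDerivAt_hartree_of_stationary H φ
    (fun t => (hω.integral_hasStrictDerivAt t₀ t).hasDerivAt) hstat⟩

/-- If `φ` satisfies the stationarity condition `H(t, φφ*) φ = ω(t) • φ` for all `t`, then
`ψ t = exp(−i ∫_{t₀}^t ω) • φ` is a soliton-type solution of the abstract Hartree equation
`ψ' = −i H(t, ψψ*) ψ` with `ψ t₀ = φ`. -/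
theorem soliton_solves_hartree {E : Type*} [NormedAddCommGroup E] [InnerProductSpace ℂ E]
    [CompleteSpace E]
    (H : ℝ × (E →L[ℂ] E) → (E →L[ℂ] E)) (φ : E) (ω : ℝ → ℝ) (t₀ : ℝ)
    (hω : Continuous ω)
    (hstat : ∀ t : ℝ, H (t, outer φ) φ = (ω t : ℂ) • φ) :
    (fun t : ℝ => Complex.exp (-Complex.I * ((∫ s in t₀..t, ω s : ℝ) : ℂ)) • φ) t₀ = φ ∧
      ∀ t : ℝ, HasDerivAt
        (fun t : ℝ => Complex.exp (-Complex.I * ((∫ s in t₀..t, ω s : ℝ) : ℂ)) • φ)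
        ((-Complex.I) • H (t, outer
            (Complex.exp (-Complex.I * ((∫ s in t₀..t, ω s : ℝ) : ℂ)) • φ))
          (Complex.exp (-Complex.I * ((∫ s in t₀..t, ω s : ℝ) : ℂ)) • φ)) t :=
  soliton_solves_hartree_general H φ ω t₀ hω hstat
end

section
/- Let E be a complex Hilbert space (a complete InnerProductSpace over ℂ). For ψ ∈ E define the outer product operator outer ψ : E →L[ℂ] E by (outer ψ) χ = ⟪ψ, χ⟫ • ψ. Let k : ℕ, let P : Fin k → (E →L[ℂ] E) be a family of self-adjoint operators that pairwise commute (P i ∘L P j = P j ∘L P i for all i j), let ν : Fin k → ℝ → ℝ be continuous functions, let t₀ ∈ ℝ, let φ ∈ E, and let H : ℝ × (E →L[ℂ] E) → (E →L[ℂ] E) be any function. For c : Fin k → ℝ write V c := exp (−Complex.I • (Σ_j (c j : ℂ) • P j)) (the exponential in the Banach algebra E →L[ℂ] E). Assume: (i) for all t, H (t, outer φ) φ = Σ_j (ν j t : ℂ) • (P j) φ; (ii) equivariance: for all t and all c : Fin k → ℝ, H (t, (V c) ∘L (outer φ) ∘L (ContinuousLinearMap.adjoint (V c))) ((V c) φ)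 = (V c) (H (t, outer φ) φ). Then ψ : ℝ → E defined by ψ t = V (fun j => ∫ s in t₀..t, ν j s) φ satisfies ψ t₀ = φ and solves the abstract Hartree equation: for every t, ψ is differentiable at t with ψ'(t) = −Complex.I • H (t, outer (ψ t)) (ψ t). -/
open scoped InnerProductSpace

/-- The unitary group generated by the commuting family `P`:
`V c = exp(−i Σ_j c_j P_j)` in the Banach algebra `E →L[ℂ] E`. -/
noncomputable def Vop {E : Type*} [NormedAddCommGroup E] [InnerProductSpace ℂ E]
    [CompleteSpace E] {k : ℕ} (P : Fin k → (E →L[ℂ] E)) (c : Fin k → ℝ) : E →L[ℂ] E :=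
  NormedSpace.exp ((-Complex.I) • ∑ j : Fin k, (c j : ℂ) • P j)

/-!
With `A s = −i Σ_j c_j(s) P_j`, `c_j(s) = ∫_{t₀}^s ν_j`, the values `A s` commute pairwise because
the `P_j` do, so `exp (A s) = exp (A t) exp (A s − A t)` and `d/dt exp (A t) = exp (A t) A'(t)` with
`A'(t) = −i Σ_j ν_j(t) P_j`. Hence `ψ'(t) = −i V (Σ_j ν_j(t) P_j φ)`. On the other side
`(Vφ)(Vφ)* = V φφ* V*`, so equivariance and the stationarity equation give
`H(t, ψψ*) ψ = V (H(t, φφ*) φ) = V (Σ_j ν_j(t) P_j φ)`.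
-/

open NormedSpace

theorem hasDerivAt_exp_of_commute {𝕂 𝔸 : Type*} [RCLike 𝕂] [NormedRing 𝔸] [NormedAlgebra 𝕂 𝔸]
    [CompleteSpace 𝔸] {A : 𝕂 → 𝔸} {A' : 𝔸} {t : 𝕂} (hA : HasDerivAt A A' t)
    (hcomm : ∀ s, Commute (A t) (A s)) :
    HasDerivAt (fun s => exp (A s)) (exp (A t) * A') t := by
  have hsplit : (fun s => exp (A s)) = fun s => exp (A t) * exp (A s - A t) := funext fun s => by
    let _ : NormedAlgebra ℚ 𝔸 := NormedAlgebra.restrictScalars ℚ 𝕂 𝔸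
    rw [← exp_add_of_commute ((hcomm s).sub_right (Commute.refl _)), add_sub_cancel]
  have hincr : HasDerivAt (fun s => exp (A s - A t)) A' t := by
    simpa [Function.comp_def] using
      (hasFDerivAt_exp_zero (𝕂 := 𝕂) (𝔸 := 𝔸)).comp_hasDerivAt_of_eq t
        (hA.sub_const (A t)) (sub_self _).symm
  rw [hsplit]
  exact hincr.const_mul (exp (A t))

theorem commute_sum_smul {R A ι : Type*} [CommSemiring R] [Semiring A] [Algebra R A]
    {P : ι → A} (hP : ∀ i j, Commute (P i) (P j)) (s : Finset ι) (a b : ι → R) :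
    Commute (∑ i ∈ s, a i • P i) (∑ j ∈ s, b j • P j) :=
  Commute.sum_left _ _ _ fun i _ => Commute.sum_right _ _ _ fun j _ =>
    ((hP i j).smul_left _).smul_right _

theorem outer_map_eq_comp_comp_adjoint {E : Type*} [NormedAddCommGroup E] [InnerProductSpace ℂ E]
    [CompleteSpace E] (U : E →L[ℂ] E) (ψ : E) :
    outer (U ψ) = U ∘L outer ψ ∘L ContinuousLinearMap.adjoint U := by
  ext χ
  simp [outer, ContinuousLinearMap.adjoint_inner_right]

theorem hasDerivAt_sum_integral_smul {F ι : Type*} [NormedAddCommGroup F] [NormedSpace ℂ F]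
    [Fintype ι] (P : ι → F) {ν : ι → ℝ → ℝ} (hν : ∀ j, Continuous (ν j)) (t₀ t : ℝ) :
    HasDerivAt (fun s => ∑ j, ((∫ u in t₀..s, ν j u : ℝ) : ℂ) • P j)
      (∑ j, (ν j t : ℂ) • P j) t :=
  HasDerivAt.fun_sum fun j _ =>
    (((hν j).integral_hasStrictDerivAt t₀ t).hasDerivAt.ofReal_comp).smul_const (P j)

theorem hasDerivAt_Vop_integral {E : Type*} [NormedAddCommGroup E] [InnerProductSpace ℂ E]
    [CompleteSpace E] {k : ℕ} {P : Fin k → (E →L[ℂ] E)} (hP : ∀ i j, Commute (P i) (P j))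
    {ν : Fin k → ℝ → ℝ} (hν : ∀ j, Continuous (ν j)) (t₀ t : ℝ) :
    HasDerivAt (fun s => Vop P fun j => ∫ u in t₀..s, ν j u)
      (Vop P (fun j => ∫ u in t₀..t, ν j u) * ((-Complex.I) • ∑ j, (ν j t : ℂ) • P j)) t :=
  hasDerivAt_exp_of_commute ((hasDerivAt_sum_integral_smul P hν t₀ t).fun_const_smul _)
    fun _ => ((commute_sum_smul hP _ _ _).smul_left _).smul_right _

theorem HasDerivAt.clm_apply_const {F G : Type*} [NormedAddCommGroup F] [NormedSpace ℂ F]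
    [NormedAddCommGroup G] [NormedSpace ℂ G] {M : ℝ → F →L[ℂ] G} {M' : F →L[ℂ] G} {t : ℝ}
    (hM : HasDerivAt M M' t) (x : F) : HasDerivAt (fun s => M s x) (M' x) t :=
  ((ContinuousLinearMap.apply ℂ G x).restrictScalars ℝ).hasFDerivAt.comp_hasDerivAt t hM

theorem generalized_soliton_solves_hartree_general {E : Type*} [NormedAddCommGroup E]
    [InnerProductSpace ℂ E] [CompleteSpace E]
    (k : ℕ) (P : Fin k → (E →L[ℂ] E)) (ν : Fin k → ℝ → ℝ) (t₀ : ℝ) (φ : E)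
    (H : ℝ × (E →L[ℂ] E) → (E →L[ℂ] E))
    (hPcomm : ∀ i j : Fin k, P i ∘L P j = P j ∘L P i)
    (hν : ∀ j : Fin k, Continuous (ν j))
    (hstat : ∀ t : ℝ, H (t, outer φ) φ = ∑ j : Fin k, ((ν j t : ℂ) • (P j) φ))
    (hequiv : ∀ (t : ℝ) (c : Fin k → ℝ),
      H (t, (Vop P c) ∘L (outer φ) ∘L (ContinuousLinearMap.adjoint (Vop P c)))
          ((Vop P c) φ) =
        (Vop P c) (H (t, outer φ) φ)) :
    (fun t : ℝ => (Vop P fun j => ∫ s in t₀..t, ν j s) φ) t₀ = φ ∧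
      ∀ t : ℝ, HasDerivAt (fun t : ℝ => (Vop P fun j => ∫ s in t₀..t, ν j s) φ)
        ((-Complex.I) • H (t, outer ((Vop P fun j => ∫ s in t₀..t, ν j s) φ))
          ((Vop P fun j => ∫ s in t₀..t, ν j s) φ)) t := by
  refine ⟨by simp [Vop], fun t => ?_⟩
  convert (hasDerivAt_Vop_integral hPcomm hν t₀ t).clm_apply_const φ using 1
  rw [outer_map_eq_comp_comp_adjoint, hequiv, hstat]
  simp

/-- Proposition 2 of the paper: if `φ` satisfies `H(t, φφ*) φ = Σ_j ν_j(t) P_j φ` with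
self-adjoint commuting `P_j` and the Hamiltonian is equivariant under the group
`V c = exp(−i Σ_j c_j P_j)`, then the generalized soliton
`ψ t = V (∫_{t₀}^t ν) φ` solves the abstract Hartree equation `ψ' = −i H(t, ψψ*) ψ`. -/
theorem generalized_soliton_solves_hartree {E : Type*} [NormedAddCommGroup E]
    [InnerProductSpace ℂ E] [CompleteSpace E]
    (k : ℕ) (P : Fin k → (E →L[ℂ] E)) (ν : Fin k → ℝ → ℝ) (t₀ : ℝ) (φ : E)
    (H : ℝ × (E →L[ℂ] E) → (E →L[ℂ] E))
    (hPsa : ∀ j : Fin k, IsSelfAdjoint (P j))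
    (hPcomm : ∀ i j : Fin k, P i ∘L P j = P j ∘L P i)
    (hν : ∀ j : Fin k, Continuous (ν j))
    (hstat : ∀ t : ℝ, H (t, outer φ) φ = ∑ j : Fin k, ((ν j t : ℂ) • (P j) φ))
    (hequiv : ∀ (t : ℝ) (c : Fin k → ℝ),
      H (t, (Vop P c) ∘L (outer φ) ∘L (ContinuousLinearMap.adjoint (Vop P c)))
          ((Vop P c) φ) =
        (Vop P c) (H (t, outer φ) φ)) :
    (fun t : ℝ => (Vop P fun j => ∫ s in t₀..t, ν j s) φ) t₀ = φ ∧
      ∀ t : ℝ, HasDerivAt (fun t : ℝ => (Vop P fun j => ∫ s in t₀..t, ν j s) φ)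
        ((-Complex.I) • H (t, outer ((Vop P fun j => ∫ s in t₀..t, ν j s) φ))
          ((Vop P fun j => ∫ s in t₀..t, ν j s) φ)) t :=
  generalized_soliton_solves_hartree_general k P ν t₀ φ H hPcomm hν hstat hequiv
end

section
/- Let E be a complex Banach space, t₀ ∈ ℝ, and let A : ℝ → (E →L[ℂ] E) be continuous with pairwise commuting values: A s ∘L A u = A u ∘L A s for all s u. Define B t := ∫ s in t₀..t, A s (Bochner integral in the Banach algebra E →L[ℂ] E). Then for every φ ∈ E the function ψ t := (exp (−Complex.I • B t)) φ satisfies ψ t₀ = φ and, for every t, ψ is differentiable at t with ψ'(t) = −Complex.I • (A t) (ψ t). -/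
open MeasureTheory NormedSpace

theorem Commute.integral_left {X 𝔸 : Type*} [MeasurableSpace X] {μ : Measure X}
    [NormedRing 𝔸] [NormedAlgebra ℝ 𝔸] {f : X → 𝔸} {c : 𝔸} (h : ∀ x, Commute (f x) c) :
    Commute (∫ x, f x ∂μ) c := by
  by_cases hf : Integrable f μ
  · rw [Commute, SemiconjBy, ← integral_mul_const_of_integrable hf,
      ← integral_const_mul_of_integrable hf]
    simp_rw [(h _).eq]
  · simp [integral_undef hf]

theorem Commute.intervalIntegral_left {𝔸 : Type*} [NormedRing 𝔸] [NormedAlgebra ℝ 𝔸]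
    {f : ℝ → 𝔸} {c : 𝔸} {a b : ℝ} {μ : Measure ℝ} (h : ∀ x, Commute (f x) c) :
    Commute (∫ x in a..b, f x ∂μ) c :=
  (Commute.integral_left h).sub_left (Commute.integral_left h)

/-- Splitting `exp (B s) = exp (B s - B t) * exp (B t)` reduces the claim to the derivative of `exp`
at `0`, which is the identity. -/
theorem HasDerivAt.exp_of_commute {𝕜 𝔸 : Type*} [RCLike 𝕜] [NormedRing 𝔸] [NormedAlgebra 𝕜 𝔸]
    [CompleteSpace 𝔸] {B : 𝕜 → 𝔸} {B' : 𝔸} {t : 𝕜} (hB : HasDerivAt B B' t)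
    (hc : ∀ s, Commute (B s) (B t)) :
    HasDerivAt (fun s => NormedSpace.exp (B s)) (B' * NormedSpace.exp (B t)) t := by
  have hsplit : (fun s => NormedSpace.exp (B s)) =
      fun s => NormedSpace.exp (B s - B t) * NormedSpace.exp (B t) := funext fun s => by
    rw [← exp_add_of_commute_of_mem_ball (𝕂 := 𝕜) ((hc s).sub_left (Commute.refl _))
      ((expSeries_radius_eq_top 𝕜 𝔸).symm ▸ edist_lt_top _ _)
      ((expSeries_radius_eq_top 𝕜 𝔸).symm ▸ edist_lt_top _ _), sub_add_cancel]
  have hshift : HasDerivAt (fun s => NormedSpace.exp (B s - B t)) B' t := by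
    simpa [Function.comp_def] using (hasFDerivAt_exp_zero (𝕂 := 𝕜) (𝔸 := 𝔸)).comp_hasDerivAt_of_eq
      t (hB.sub_const (B t)) (sub_self _).symm
  exact hsplit ▸ hshift.mul_const _

/-- If the values of a continuous generator `A : ℝ → E →L[ℂ] E` pairwise commute, the
time-ordered exponential disentangles to the ordinary exponential of the integral:
`ψ t = exp(−i ∫_{t₀}^t A) φ` solves `ψ' = −i A(t) ψ`, `ψ t₀ = φ`. -/
theorem exp_integral_solves_schrodinger {E : Type*} [NormedAddCommGroup E]
    [NormedSpace ℂ E] [CompleteSpace E]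
    (t₀ : ℝ) (A : ℝ → (E →L[ℂ] E))
    (hA : Continuous A)
    (hcomm : ∀ s u : ℝ, A s ∘L A u = A u ∘L A s)
    (φ : E) :
    (fun t : ℝ => (NormedSpace.exp ((-Complex.I) • ∫ s in t₀..t, A s)) φ) t₀ = φ ∧
      ∀ t : ℝ, HasDerivAt
        (fun t : ℝ => (NormedSpace.exp ((-Complex.I) • ∫ s in t₀..t, A s)) φ)
        ((-Complex.I) • (A t) ((NormedSpace.exp ((-Complex.I) • ∫ s in t₀..t, A s)) φ))
        t := by
  refine ⟨by simp, fun t => ?_⟩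
  have hgen : HasDerivAt (fun t => (-Complex.I) • ∫ s in t₀..t, A s) ((-Complex.I) • A t) t :=
    (intervalIntegral.integral_hasDerivAt_right (hA.intervalIntegrable t₀ t)
      (hA.stronglyMeasurableAtFilter _ _) hA.continuousAt).const_smul (-Complex.I)
  have hgen_comm : ∀ s u, Commute ((-Complex.I) • ∫ x in t₀..s, A x)
      ((-Complex.I) • ∫ x in t₀..u, A x) := fun s u =>
    ((Commute.intervalIntegral_left fun x => (Commute.intervalIntegral_left fun y =>
      (hcomm y x : Commute (A y) (A x))).symm).smul_left _).smul_right _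
  simpa [Function.comp_def] using
    ((ContinuousLinearMap.apply ℂ E φ).restrictScalars ℝ).hasFDerivAt.comp_hasDerivAt t
      (hgen.exp_of_commute (hgen_comm · t))
end
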